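/- arXiv:0907.4276 — 8 statements merged into one kernel-verified Lean document; each statement's English description precedes it below -/
import Mathlib

section
/- Let X be a nonempty set, H ⊆ Sym(X) a permutation group, and f : X → H a map satisfying: (1) f(X) generates H, (2) f_x(x) = x for all x ∈ X, and (3) f_{f_y(x)} ∘ f_y = f_{f_x(y)} ∘ f_x for all x,y ∈ X. Then the map r : X × X → X × X defined by r(x,y) = (f_x(y), f_y⁻¹(x)) is a non-degenerate involutive square-free set-theoretic solution of the Yang–Baxter equation, and the subgroup of Sym(X) generated by {f_x : x ∈ X} equals H. -/
namespace YBPaper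

variable {X : Type*}

/-- Left translation: `lact r x y = ˣy`. -/
def lact (r : X × X → X × X) (x y : X) : X := (r (x, y)).1

/-- Right translation: `ract r x y = xʸ`. -/
def ract (r : X × X → X × X) (x y : X) : X := (r (x, y)).2

def r12 (r : X × X → X × X) : X × X × X → X × X × X :=
  fun p => ((r (p.1, p.2.1)).1, (r (p.1, p.2.1)).2, p.2.2)

def r23 (r : X × X → X × X) : X × X × X → X × X × X :=
  fun p => (p.1, r (p.2.1, p.2.2))

/-- A non-degenerate involutive square-free set-theoretic solution of the YBE. -/
structure IsSquareFreeSolution (r : X × X → X × X) : Prop where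
  nondegL : ∀ x : X, Function.Bijective fun y => (r (x, y)).1
  nondegR : ∀ y : X, Function.Bijective fun x => (r (x, y)).2
  invol : ∀ p : X × X, r (r p) = p
  sqfree : ∀ x : X, r (x, x) = (x, x)
  braided : ∀ p : X × X × X, r12 r (r23 r (r12 r p)) = r23 r (r12 r (r23 r p))

/-- `relk l k x y` means the images of `x` and `y` in the `k`-th retract coincide. -/
def relk (l : X → X → X) : ℕ → X → X → Prop
  | 0 => fun x y => x = y
  | (k+1) => fun x y => ∀ z : X, relk l k (l x z) (l y z)

/-- `mplLe l m` : the `m`-th retract is a one-element solution, i.e. `mpl ≤ m`. -/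
def mplLe (l : X → X → X) (m : ℕ) : Prop := ∀ x y : X, relk l m x y

/-- `mplEq l m` : the multipermutation level is exactly `m`. -/
def mplEq (l : X → X → X) (m : ℕ) : Prop := mplLe l m ∧ ∀ k < m, ¬ mplLe l k

/-- The set of left translations, as permutations. -/
def lperms (r : X × X → X × X) : Set (Equiv.Perm X) :=
  {σ : Equiv.Perm X | ∃ x : X, ∀ y : X, σ y = (r (x, y)).1}

/-- The YB permutation group `𝒢(X,r)`, generated by the left translations. -/
def Gcal (r : X × X → X × X) : Subgroup (Equiv.Perm X) := Subgroup.closure (lperms r)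

/-! Evaluating condition (3) at suitable points gives the two identities
`f_{f_a b} a = f_b a` (with (2)) and `f_{f_a b} (f_a c) = f_{f_b a} (f_b c)`. After writing
the arguments of `r` in the form `(f_y v, y)`, resp. `(f_{f_z w} (f_z t), f_z w, z)`, which
non-degeneracy allows, involutivity and the braid relation reduce to these two identities. -/

section PermSolution

def permSolution (f : X → Equiv.Perm X) : X × X → X × X :=
  fun p => (f p.1 p.2, (f p.2)⁻¹ p.1)

variable {f : X → Equiv.Perm X}

theorem apply_apply_left_of_comp (hfix : ∀ x, f x x = x)
    (hcomp : ∀ x y, f (f y x) * f y = f (f x y) * f x) (a b : X) :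
    f (f a b) a = f b a := by
  simpa [hfix] using (DFunLike.congr_fun (hcomp a b) a).symm

theorem apply_apply_apply_of_comp (hcomp : ∀ x y, f (f y x) * f y = f (f x y) * f x)
    (a b c : X) : f (f a b) (f a c) = f (f b a) (f b c) :=
  DFunLike.congr_fun (hcomp b a) c

theorem permSolution_apply_left (hfix : ∀ x, f x x = x)
    (hcomp : ∀ x y, f (f y x) * f y = f (f x y) * f x) (y v : X) :
    permSolution f (f y v, y) = (f v y, v) := by
  simp [permSolution, apply_apply_left_of_comp hfix hcomp]

theorem permSolution_involutive (hfix : ∀ x, f x x = x)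
    (hcomp : ∀ x y, f (f y x) * f y = f (f x y) * f x) (p : X × X) :
    permSolution f (permSolution f p) = p := by
  obtain ⟨x, y⟩ := p
  obtain ⟨v, rfl⟩ := (f y).surjective x
  rw [permSolution_apply_left hfix hcomp, permSolution_apply_left hfix hcomp]

theorem permSolution_braided (hfix : ∀ x, f x x = x)
    (hcomp : ∀ x y, f (f y x) * f y = f (f x y) * f x) (p : X × X × X) :
    r12 (permSolution f) (r23 (permSolution f) (r12 (permSolution f) p)) =
      r23 (permSolution f) (r12 (permSolution f) (r23 (permSolution f) p)) := by
  have left := apply_apply_left_of_comp hfix hcomp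
  have swap := apply_apply_apply_of_comp hcomp
  obtain ⟨x, y, z⟩ := p
  obtain ⟨w, rfl⟩ := (f z).surjective y
  obtain ⟨t, rfl⟩ := (f (f z w) * f z).surjective x
  simp only [r12, r23, permSolution, Equiv.Perm.mul_apply, Equiv.Perm.coe_inv,
    Equiv.symm_apply_apply, left]
  rw [swap z t w, swap z w t]
  simp only [left, Equiv.symm_apply_apply, swap t w z]

theorem isSquareFreeSolution_permSolution (hfix : ∀ x, f x x = x)
    (hcomp : ∀ x y, f (f y x) * f y = f (f x y) * f x) :
    IsSquareFreeSolution (permSolution f) where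
  nondegL x := (f x).bijective
  nondegR y := (f y)⁻¹.bijective
  invol := permSolution_involutive hfix hcomp
  sqfree x := by simp [permSolution, hfix, Equiv.symm_apply_eq]
  braided := permSolution_braided hfix hcomp

end PermSolution

theorem stmt1_general {X : Type*} (H : Subgroup (Equiv.Perm X))
    (f : X → Equiv.Perm X)
    (hgen : Subgroup.closure (Set.range f) = H)
    (hfix : ∀ x : X, f x x = x)
    (hcomp : ∀ x y : X, f (f y x) * f y = f (f x y) * f x) :
    IsSquareFreeSolution (fun p : X × X => (f p.1 p.2, (f p.2)⁻¹ p.1)) ∧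
      Subgroup.closure {σ : Equiv.Perm X | ∃ x : X, σ = f x} = H := by
  refine ⟨isSquareFreeSolution_permSolution hfix hcomp, ?_⟩
  have hrange : {σ : Equiv.Perm X | ∃ x : X, σ = f x} = Set.range f := by
    ext σ
    simp [eq_comm]
  rw [hrange, hgen]

/-- permutation groups with a map `f` satisfying the three conditions
give square-free solutions with YB permutation group `H`. -/
theorem stmt1 {X : Type*} [Nonempty X] (H : Subgroup (Equiv.Perm X))
    (f : X → Equiv.Perm X)
    (hmem : ∀ x : X, f x ∈ H)
    (hgen : Subgroup.closure (Set.range f) = H)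
    (hfix : ∀ x : X, f x x = x)
    (hcomp : ∀ x y : X, f (f y x) * f y = f (f x y) * f x) :
    IsSquareFreeSolution (fun p : X × X => (f p.1 p.2, (f p.2)⁻¹ p.1)) ∧
      Subgroup.closure {σ : Equiv.Perm X | ∃ x : X, σ = f x} = H :=
  stmt1_general H f hgen hfix hcomp

end YBPaper
end

section
/- Let (X,r) be a square-free solution of the YBE (non-degenerate, involutive, square-free). If L_x and L_y are both automorphisms of the solution (X,r), then L_x ∘ L_y = L_y ∘ L_x. Consequently the intersection Aut(X,r) ∩ G(X,r) is an abelian subgroup of G(X,r). -/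
/-!
Part one: write `y = ˣa`. The braid relation and `L_x ∈ Aut` give `L_{xᵃ} = L_x`, involutivity gives
`L_y (xᵃ) = x`, and the automorphism property of `L_y` at `(xᵃ, z)` is then the claim.

Part two: the elements `(e_x, L_x)` generate a subgroup `H` of `ℤ^X ⋊ Sym(X)` whose translation part
is the Etingof–Schedler–Soloviev 1-cocycle. `H` meets `Sym(X)` trivially: by the braid relation any
letter occurring in a positive word can be moved to its front, so positive words with the same
translation part have the same permutation part, and every element of `H` is a left fraction of
positive words. Hence the translation part of a lift of `g ∈ 𝒢(X,r)`, taken modulo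
`V = {v | (v, 1) ∈ H}`, determines `g`. For an automorphism `σ`, `σ L_z σ⁻¹ = L_{σ z}` shows that
this class is fixed by `𝒢(X,r)`, and for two such `σ, τ` the cocycle identity gives
`c(στ) = c(σ) + c(τ) = c(τσ)`.
-/

namespace YBPaper

variable {X : Type*}

/-- `L_x` is an automorphism of the solution (pointwise formulation via lri). -/
def IsAutPt (r : X × X → X × X) (x : X) : Prop :=
  ∀ a b : X, lact r x (lact r a b) = lact r (lact r x a) (lact r x b)

/-- `σ` is an automorphism of the solution `(X,r)`. -/
def IsAutPerm (r : X × X → X × X) (σ : Equiv.Perm X) : Prop :=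
  ∀ p : X × X, r (σ p.1, σ p.2) = (σ (r p).1, σ (r p).2)

section SemidirectProduct

open SemidirectProduct Subgroup

variable {N P : Type*} [CommGroup N] [Group P] {φ : P →* MulAut N}

theorem mul_inl_mul_inv (a : N ⋊[φ] P) (n : N) : a * inl n * a⁻¹ = inl (φ a.right n) := by
  ext <;> simp [mul_left, inv_left, mul_right, inv_right, mul_comm]

theorem mul_mul_inv_mul_inv_eq_inl (s a b : N ⋊[φ] P)
    (hright : s.right * a.right * s.right⁻¹ = b.right) (hleft : φ s.right a.left = b.left) :
    s * a * s⁻¹ * b⁻¹ = inl (s.left / φ b.right s.left) := by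
  rw [mul_inv_eq_iff_eq_mul]
  ext
  · simp only [mul_left, mul_right, inv_left, left_inl, right_inl, map_one,
      MulAut.one_apply, hleft, ← MulAut.mul_apply, ← map_mul, hright]
    rw [div_mul_eq_mul_div, div_eq_mul_inv, map_inv]
  · simp only [mul_right, inv_right, right_inl, hright, one_mul]

variable {H : Subgroup (N ⋊[φ] P)}

theorem inl_apply_mem {a : N ⋊[φ] P} {n : N} (ha : a ∈ H) (hn : inl n ∈ H) :
    inl (φ a.right n) ∈ H := by
  rw [← mul_inl_mul_inv]
  exact mul_mem (mul_mem ha hn) (inv_mem ha)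

theorem right_eq_of_inl_div_mem (hH : ∀ a ∈ H, a.left = 1 → a.right = 1)
    {a b : N ⋊[φ] P} (ha : a ∈ H) (hb : b ∈ H) (hab : inl (a.left / b.left) ∈ H) :
    a.right = b.right := by
  have hmem : b⁻¹ * ((inl (a.left / b.left))⁻¹ * a) ∈ H :=
    mul_mem (inv_mem hb) (mul_mem (inv_mem hab) ha)
  have hleft : (b⁻¹ * ((inl (a.left / b.left))⁻¹ * a)).left = 1 := by
    simp only [mul_left, inv_left, inv_right, left_inl, right_inl, inv_one, map_one,
      MulAut.one_apply, inv_div, div_mul_cancel, ← map_mul, inv_mul_cancel]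
  have hright := hH _ hmem hleft
  simp only [mul_right, inv_right, right_inl, inv_one, one_mul, inv_mul_eq_one] at hright
  exact hright.symm

theorem inl_apply_mem_of_mem_map {g : P} {n : N} (hg : g ∈ H.map rightHom) (hn : inl n ∈ H) :
    inl (φ g n) ∈ H := by
  obtain ⟨a, ha, rfl⟩ := hg
  exact inl_apply_mem ha hn

theorem inl_div_apply_mem_of_mem_closure {S : Set P} (hS : closure S ≤ H.map rightHom) {n : N}
    (hn : ∀ g ∈ S, inl (n / φ g n) ∈ H) {g : P} (hg : g ∈ closure S) :
    inl (n / φ g n) ∈ H := by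
  induction hg using closure_induction with
  | mem g hg => exact hn g hg
  | one => simp
  | mul g g' hg _ ih ih' =>
    have hsplit : n / φ (g * g') n = n / φ g n * φ g (n / φ g' n) := by
      simp only [map_div, map_mul, MulAut.mul_apply, div_mul_div_cancel]
    rw [hsplit, map_mul]
    exact mul_mem ih (inl_apply_mem_of_mem_map (hS hg) ih')
  | inv g hg ih =>
    have hinv : n / φ g⁻¹ n = φ g⁻¹ (n / φ g n)⁻¹ := by simp
    refine hinv ▸ inl_apply_mem_of_mem_map (inv_mem (hS hg)) ?_
    simpa only [map_inv] using inv_mem ih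

theorem right_mul_comm (hH : ∀ a ∈ H, a.left = 1 → a.right = 1) {s t : N ⋊[φ] P}
    (hs : s ∈ H) (ht : t ∈ H) (hst : inl (s.left / φ t.right s.left) ∈ H)
    (hts : inl (t.left / φ s.right t.left) ∈ H) : s.right * t.right = t.right * s.right := by
  have hdiv : (s * t).left / (t * s).left
      = s.left / φ t.right s.left / (t.left / φ s.right t.left) := by
    simp only [mul_left]
    rw [div_div_div_eq, div_eq_div_iff_mul_eq_mul]
    ac_rfl
  have := right_eq_of_inl_div_mem hH (mul_mem hs ht) (mul_mem ht hs)
    (by rw [hdiv, map_div]; exact div_mem hst hts)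
  simpa only [mul_right] using this

end SemidirectProduct

section Solution

variable {r : X × X → X × X} (h : IsSquareFreeSolution r)
include h

theorem lact_lact_ract (x y : X) : lact r (lact r x y) (ract r x y) = x :=
  congrArg Prod.fst (h.invol (x, y))

theorem lact_lact_lact_ract (x y z : X) :
    lact r (lact r x y) (lact r (ract r x y) z) = lact r x (lact r y z) := by
  simpa [r12, r23, lact, ract] using congrArg Prod.fst (h.braided (x, y, z))

theorem lact_comm_of_isAutPt {x y : X} (hx : IsAutPt r x) (hy : IsAutPt r y) (z : X) :
    lact r x (lact r y z) = lact r y (lact r x z) := by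
  obtain ⟨a, ha⟩ := (h.nondegL x).surjective y
  replace ha : lact r x a = y := ha
  subst ha
  have hL : ∀ b, lact r (ract r x a) b = lact r x b := fun b =>
    (h.nondegL (lact r x a)).injective ((lact_lact_lact_ract h x a b).trans (hx a b))
  have := hy (ract r x a) z
  rw [hL, lact_lact_ract h] at this
  exact this.symm

noncomputable def lperm (x : X) : Equiv.Perm X := Equiv.ofBijective _ (h.nondegL x)

@[simp] theorem lperm_apply (x y : X) : lperm h x y = lact r x y := rfl

theorem lperm_mul_lperm (x y : X) :
    lperm h x * lperm h y = lperm h (lact r x y) * lperm h (ract r x y) := by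
  ext t
  simp [lact_lact_lact_ract h]

theorem lperms_eq_range_lperm : lperms r = Set.range (lperm h) := by
  ext σ
  exact ⟨fun ⟨x, hx⟩ => ⟨x, Equiv.ext fun y => (hx y).symm⟩, fun ⟨x, hx⟩ => ⟨x, fun y => hx ▸ rfl⟩⟩

theorem IsAutPerm.mul_lperm_mul_inv {σ : Equiv.Perm X} (hσ : IsAutPerm r σ) (z : X) :
    σ * lperm h z * σ⁻¹ = lperm h (σ z) := by
  ext t
  simpa [lact] using (congrArg Prod.fst (hσ (z, σ⁻¹ t))).symm

end Solution

theorem mulAutArrow_mulSingle {G A M : Type*} [Group G] [MulAction G A] [Monoid M] [DecidableEq A]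
    (g : G) (a : A) (m : M) : mulAutArrow g (Pi.mulSingle a m) = Pi.mulSingle (g • a) m := by
  ext t
  change Pi.mulSingle (M := fun _ => M) a m (g⁻¹ • t) = _
  simp [Pi.mulSingle_apply, inv_smul_eq_iff]

theorem one_lt_ofAdd_one : (1 : Multiplicative ℤ) < .ofAdd 1 :=
  Multiplicative.ofAdd_lt (a := (0 : ℤ)).2 one_pos

abbrev Wreath (X : Type*) := (X → Multiplicative ℤ) ⋊[mulAutArrow] Equiv.Perm X

section Wreath

open SemidirectProduct Subgroup
open scoped Classical

variable {r : X × X → X × X} (h : IsSquareFreeSolution r)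
include h

noncomputable def gen (x : X) : Wreath X := ⟨Pi.mulSingle x (Multiplicative.ofAdd 1), lperm h x⟩

theorem gen_mul_gen (x y : X) : gen h x * gen h y = gen h (lact r x y) * gen h (ract r x y) := by
  ext1
  · simp only [gen, mul_left, mulAutArrow_mulSingle, Equiv.Perm.smul_def, lperm_apply,
      lact_lact_ract h]
    exact mul_comm _ _
  · exact lperm_mul_lperm h x y

theorem gen_mul_inv_gen (x b : X) : ∃ u w, gen h x * (gen h b)⁻¹ = (gen h u)⁻¹ * gen h w := by
  obtain ⟨u, hu⟩ := (h.nondegR x).surjective b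
  refine ⟨u, lact r u x, ?_⟩
  rw [eq_inv_mul_iff_mul_eq, ← mul_assoc, mul_inv_eq_iff_eq_mul, gen_mul_gen h u x]
  exact congrArg (gen h (lact r u x) * gen h ·) hu

noncomputable def posProd (P : List X) : Wreath X := (P.map (gen h)).prod

@[simp] theorem posProd_nil : posProd h [] = 1 := rfl

@[simp] theorem posProd_cons (a : X) (P : List X) : posProd h (a :: P) = gen h a * posProd h P :=
  List.prod_cons

theorem gen_mul_inv_posProd (N : List X) (y : X) :
    ∃ N' y', gen h y * (posProd h N)⁻¹ = (posProd h N')⁻¹ * gen h y' := by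
  induction N generalizing y with
  | nil => exact ⟨[], y, by simp⟩
  | cons b N ih =>
    obtain ⟨N', y', e⟩ := ih y
    obtain ⟨u, w, e'⟩ := gen_mul_inv_gen h y' b
    refine ⟨u :: N', w, ?_⟩
    rw [posProd_cons, mul_inv_rev, ← mul_assoc, e, mul_assoc, e', posProd_cons, mul_inv_rev,
      mul_assoc]

theorem exists_eq_inv_posProd_mul_posProd {a : Wreath X} (ha : a ∈ closure (Set.range (gen h))) :
    ∃ N P, a = (posProd h N)⁻¹ * posProd h P := by
  induction ha using closure_induction_left with
  | one => exact ⟨[], [], by simp⟩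
  | mul_left _ hx _ _ ih =>
    obtain ⟨⟨z, rfl⟩, ⟨N, P, rfl⟩⟩ := And.intro hx ih
    obtain ⟨N', y', e⟩ := gen_mul_inv_posProd h N z
    exact ⟨N', y' :: P, by rw [← mul_assoc, e, mul_assoc, posProd_cons]⟩
  | inv_mul_cancel _ hx _ _ ih =>
    obtain ⟨⟨z, rfl⟩, ⟨N, P, rfl⟩⟩ := And.intro hx ih
    exact ⟨N ++ [z], P, by simp [posProd, mul_assoc]⟩

theorem posProd_cons_left_apply (a : X) (P : List X) (t : X) :
    (posProd h (a :: P)).left t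
      = Pi.mulSingle (M := fun _ => Multiplicative ℤ) a (.ofAdd 1) t
        * (posProd h P).left ((lperm h a)⁻¹ t) :=
  rfl

theorem one_le_posProd_left (P : List X) (t : X) : 1 ≤ (posProd h P).left t := by
  induction P generalizing t with
  | nil => simp
  | cons a P ih =>
    rw [posProd_cons_left_apply]
    refine one_le_mul ?_ (ih _)
    rw [Pi.mulSingle_apply]
    split_ifs
    exacts [one_lt_ofAdd_one.le, le_rfl]

theorem one_lt_posProd_cons_left (a : X) (P : List X) : 1 < (posProd h (a :: P)).left a := by
  rw [posProd_cons_left_apply, Pi.mulSingle_eq_same]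
  exact one_lt_mul_of_lt_of_le' one_lt_ofAdd_one (one_le_posProd_left h P _)

theorem exists_posProd_cons_eq (P : List X) {z : X} (hz : (posProd h P).left z ≠ 1) :
    ∃ Q, posProd h (z :: Q) = posProd h P := by
  induction P generalizing z with
  | nil => exact absurd rfl hz
  | cons a P ih =>
    by_cases hza : z = a
    · exact ⟨P, hza ▸ rfl⟩
    rw [posProd_cons_left_apply, Pi.mulSingle_eq_of_ne hza, one_mul] at hz
    obtain ⟨Q, hQ⟩ := ih hz
    refine ⟨ract r a ((lperm h a)⁻¹ z) :: Q, ?_⟩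
    rw [posProd_cons h a, ← hQ]
    simp only [posProd_cons]
    rw [← mul_assoc (gen h a), gen_mul_gen h a, ← lperm_apply h, Equiv.Perm.coe_inv,
      Equiv.apply_symm_apply, mul_assoc]

theorem posProd_right_eq_of_left_eq (P Q : List X)
    (hPQ : (posProd h P).left = (posProd h Q).left) :
    (posProd h P).right = (posProd h Q).right := by
  induction P generalizing Q with
  | nil =>
    cases Q with
    | nil => rfl
    | cons b Q => exact absurd (congrFun hPQ b) (one_lt_posProd_cons_left h b Q).ne
  | cons a P ih =>
    obtain ⟨Q', hQ'⟩ := exists_posProd_cons_eq h Q (hPQ ▸ (one_lt_posProd_cons_left h a P).ne')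
    rw [← hQ'] at hPQ ⊢
    simp only [posProd_cons, mul_left, mul_right] at hPQ ⊢
    rw [ih Q' ((mulAutArrow _).injective (mul_left_cancel hPQ))]

theorem right_eq_one_of_left_eq_one {a : Wreath X} (ha : a ∈ closure (Set.range (gen h)))
    (h1 : a.left = 1) : a.right = 1 := by
  obtain ⟨N, P, rfl⟩ := exists_eq_inv_posProd_mul_posProd h ha
  have hleft : (posProd h P).left = (posProd h N).left := by
    have := congrArg SemidirectProduct.left (mul_inv_cancel_left (posProd h N) (posProd h P))
    rwa [mul_left, h1, map_one, mul_one, eq_comm] at this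
  simp [posProd_right_eq_of_left_eq h P N hleft]

theorem map_rightHom_closure_range_gen : (closure (Set.range (gen h))).map rightHom = Gcal r := by
  rw [MonoidHom.map_closure, Gcal, lperms_eq_range_lperm h, ← Set.range_comp]
  rfl

theorem inl_div_mem_of_isAutPerm {σ : Equiv.Perm X} (hσ : IsAutPerm r σ) {s : Wreath X}
    (hs : s ∈ closure (Set.range (gen h))) (hsσ : s.right = σ) {g : Equiv.Perm X}
    (hg : g ∈ Gcal r) : inl (s.left / mulAutArrow g s.left) ∈ closure (Set.range (gen h)) := by
  refine inl_div_apply_mem_of_mem_closure (S := Set.range (lperm h))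
    (by rw [map_rightHom_closure_range_gen h, Gcal, lperms_eq_range_lperm h]) ?_
    (by rwa [Gcal, lperms_eq_range_lperm h] at hg)
  rintro _ ⟨u, rfl⟩
  obtain ⟨z, rfl⟩ := σ.surjective u
  have hconj : s * gen h z * s⁻¹ * (gen h (σ z))⁻¹
      = inl (s.left / mulAutArrow (lperm h (σ z)) s.left) :=
    mul_mul_inv_mul_inv_eq_inl s (gen h z) (gen h (σ z)) (hsσ ▸ hσ.mul_lperm_mul_inv h z)
      (by simp [gen, hsσ, mulAutArrow_mulSingle])
  rw [← hconj]
  exact mul_mem (mul_mem (mul_mem hs (subset_closure ⟨z, rfl⟩)) (inv_mem hs))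
    (inv_mem (subset_closure ⟨σ z, rfl⟩))

theorem commute_of_isAutPerm {σ τ : Equiv.Perm X} (hσ : IsAutPerm r σ) (hσG : σ ∈ Gcal r)
    (hτ : IsAutPerm r τ) (hτG : τ ∈ Gcal r) : σ * τ = τ * σ := by
  have hG := map_rightHom_closure_range_gen h
  obtain ⟨s, hs, rfl⟩ : σ ∈ (closure (Set.range (gen h))).map rightHom := hG ▸ hσG
  obtain ⟨t, ht, rfl⟩ : τ ∈ (closure (Set.range (gen h))).map rightHom := hG ▸ hτG
  exact right_mul_comm (fun _ => right_eq_one_of_left_eq_one h) hs ht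
    (inl_div_mem_of_isAutPerm h hσ hs rfl hτG) (inl_div_mem_of_isAutPerm h hτ ht rfl hσG)

end Wreath

/-- if `L_x, L_y` are automorphisms then they commute; consequently
`Aut(X,r) ∩ 𝒢(X,r)` is abelian. -/
theorem stmt3 {X : Type*} (r : X × X → X × X) (h : IsSquareFreeSolution r) :
    (∀ x y : X, IsAutPt r x → IsAutPt r y →
        ∀ z : X, lact r x (lact r y z) = lact r y (lact r x z)) ∧
    (∀ σ τ : Equiv.Perm X, IsAutPerm r σ → σ ∈ Gcal r → IsAutPerm r τ → τ ∈ Gcal r →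
        σ * τ = τ * σ) :=
  ⟨fun _ _ hx hy => lact_comm_of_isAutPt h hx hy, fun _ _ => commute_of_isAutPerm h⟩

end YBPaper
end

section
/- Let (X,r) be a square-free solution with associated group G(X,r) = ⟨X | xy = (ˣy)(xʸ)⟩ and let L : G(X,r) → Sym(X) be the group homomorphism extending x ↦ L_x. Then the kernel K₀ = ker L is an abelian normal subgroup of G(X,r): any two elements u, v ∈ G with L_u = id and L_v = id commute. -/
namespace YBPaper

variable {X : Type*}

/-- Relations of the structure group `G(X,r) = ⟨X ∣ xy = (ˣy)(xʸ)⟩`. -/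
def structRels (r : X × X → X × X) : Set (FreeGroup X) :=
  {w | ∃ x y : X, w = FreeGroup.of x * FreeGroup.of y *
        (FreeGroup.of ((r (x, y)).1) * FreeGroup.of ((r (x, y)).2))⁻¹}


/-!
Since `L` respects `xy = (ˣy)(xʸ)` and `L_{xʸ}` fixes `xʸ`, the right translations are
`xʸ = L_y⁻¹ x`, and the relations take the symmetric form `(ᵇa) b = (ᵃb) a`. This makes
`Λ_x v = x v (xᵛ)⁻¹`, with `xᵛ = L_v⁻¹ x`, a well-defined action `v ↦ ᵘv` of `G(X,r)` on itself.
It satisfies `ᵘy = L_u y` on generators and the cocycle identity `ᵘ(vw) = (ᵘv)(^{uᵛ}w)` with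
`uᵛ = (ᵘv)⁻¹uv`. Induction over words then shows that `ᵘv = v` and `ᵃu = aua⁻¹` for `u ∈ ker L`
and all `v, a`. For `u, v ∈ ker L` this gives `u = ᵛu = vuv⁻¹`.
-/

open PresentedGroup

theorem presentedGroup_induction {α : Type*} {rels : Set (FreeGroup α)}
    {C : PresentedGroup rels → Prop} (one : C 1) (gen : ∀ x, C (of x))
    (mul : ∀ g g', C g → C g' → C (g * g')) (inv : ∀ g, C g → C g⁻¹)
    (g : PresentedGroup rels) : C g :=
  generated_by rels
    { carrier := {g | C g}, one_mem' := one, mul_mem' := mul _ _, inv_mem' := inv _ } gen g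

abbrev StructureGroup (r : X × X → X × X) : Type _ := PresentedGroup (structRels r)

section

variable {r : X × X → X × X} {L : StructureGroup r →* Equiv.Perm X}

theorem of_mul_of (x y : X) :
    (of x : StructureGroup r) * of y = of (r (x, y)).1 * of (r (x, y)).2 :=
  mk_eq_mk_of_mul_inv_mem ⟨x, y, rfl⟩

theorem map_of_apply_self (h : IsSquareFreeSolution r)
    (hL : ∀ x y : X, L (of x) y = (r (x, y)).1) (z : X) : L (of z) z = z := by
  rw [hL, h.sqfree]

theorem eq_map_of_apply (h : IsSquareFreeSolution r)
    (hL : ∀ x y : X, L (of x) y = (r (x, y)).1) (x y : X) :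
    r (x, y) = (L (of x) y, (L (of y))⁻¹ x) := by
  refine Prod.ext (hL x y).symm (Equiv.Perm.eq_inv_iff_eq.2 ?_)
  apply (L (of x)).injective
  calc L (of x) (L (of y) (r (x, y)).2)
      = L (of (r (x, y)).1 * of (r (x, y)).2) (r (x, y)).2 := by
        rw [← of_mul_of, map_mul, Equiv.Perm.mul_apply]
    _ = x := by rw [map_mul, Equiv.Perm.mul_apply, map_of_apply_self h hL, hL, h.invol]
    _ = L (of x) x := (map_of_apply_self h hL x).symm

theorem of_mul_of_eq (h : IsSquareFreeSolution r)
    (hL : ∀ x y : X, L (of x) y = (r (x, y)).1) (x y : X) :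
    (of x : StructureGroup r) * of y = of (L (of x) y) * of ((L (of y))⁻¹ x) := by
  rw [of_mul_of, eq_map_of_apply h hL]

theorem of_map_of_apply_mul_of (h : IsSquareFreeSolution r)
    (hL : ∀ x y : X, L (of x) y = (r (x, y)).1) (a b : X) :
    (of (L (of b) a) : StructureGroup r) * of b = of (L (of a) b) * of a := by
  set c := L (of b) a
  have hc : r (c, b) = (L (of c) b, a) := by
    rw [eq_map_of_apply h hL, Equiv.Perm.inv_eq_iff_eq.2 rfl]
  have hinv := h.invol (c, b)
  rw [hc, eq_map_of_apply h hL, Prod.mk.injEq, Equiv.Perm.inv_eq_iff_eq] at hinv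
  rw [of_mul_of, hc, ← hinv.2]

theorem map_of_inv_apply_map_of_apply (h : IsSquareFreeSolution r)
    (hL : ∀ x y : X, L (of x) y = (r (x, y)).1) (x y : X) :
    (L (of ((L (of y))⁻¹ x)))⁻¹ (L (of x) y) = y := by
  have hinv := h.invol (x, y)
  rw [eq_map_of_apply h hL x y, eq_map_of_apply h hL] at hinv
  exact (Prod.mk.inj hinv).2

def leftActionOf (hfix : ∀ z, L (of z) z = z) (x : X) : Equiv.Perm (StructureGroup r) where
  toFun v := of x * v * (of ((L v)⁻¹ x))⁻¹
  invFun w := (of x)⁻¹ * w * of ((L w)⁻¹ x)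
  left_inv v := by
    have hfix' : ∀ z, (L (of z))⁻¹ z = z := fun z => Equiv.Perm.inv_eq_iff_eq.2 (hfix z).symm
    have hx : (L (of x * v * (of ((L v)⁻¹ x))⁻¹))⁻¹ x = (L v)⁻¹ x := by
      simp [Equiv.Perm.mul_apply, hfix, hfix']
    dsimp only
    rw [hx]
    group
  right_inv w := by
    have hfix' : ∀ z, (L (of z))⁻¹ z = z := fun z => Equiv.Perm.inv_eq_iff_eq.2 (hfix z).symm
    have hx : (L ((of x)⁻¹ * w * of ((L w)⁻¹ x)))⁻¹ x = (L w)⁻¹ x := by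
      simp [Equiv.Perm.mul_apply, hfix, hfix']
    dsimp only
    rw [hx]
    group

theorem leftActionOf_apply (hfix : ∀ z, L (of z) z = z) (x : X) (v : StructureGroup r) :
    leftActionOf hfix x v = of x * v * (of ((L v)⁻¹ x))⁻¹ :=
  rfl

theorem leftActionOf_leftActionOf_apply (hfix : ∀ z, L (of z) z = z) (x y : X)
    (v : StructureGroup r) :
    leftActionOf hfix x (leftActionOf hfix y v) = of x * of y * v *
      (of (L (of ((L v)⁻¹ y)) ((L v)⁻¹ ((L (of y))⁻¹ x))) * of ((L v)⁻¹ y))⁻¹ := by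
  simp only [leftActionOf_apply, map_mul, map_inv, mul_inv_rev, inv_inv, Equiv.Perm.mul_apply]
  group

/-- `leftAction h hL u v` is `ᵘv`. -/
def leftAction (h : IsSquareFreeSolution r) (hL : ∀ x y : X, L (of x) y = (r (x, y)).1) :
    StructureGroup r →* Equiv.Perm (StructureGroup r) :=
  toGroup (f := leftActionOf (map_of_apply_self h hL)) <| by
    rintro _ ⟨x, y, rfl⟩
    simp only [map_mul, map_inv, FreeGroup.lift_apply_of, mul_inv_eq_one]
    ext v
    -- both sides are `x y v ((ᵇa) b)⁻¹`, with the roles of `a` and `b` swapped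
    rw [Equiv.Perm.mul_apply, Equiv.Perm.mul_apply, leftActionOf_leftActionOf_apply,
      leftActionOf_leftActionOf_apply, of_mul_of_eq h hL x y, eq_map_of_apply h hL,
      map_of_inv_apply_map_of_apply h hL, of_map_of_apply_mul_of h hL]

theorem leftAction_of_apply (h : IsSquareFreeSolution r)
    (hL : ∀ x y : X, L (of x) y = (r (x, y)).1) (x : X) (v : StructureGroup r) :
    leftAction h hL (of x) v = of x * v * (of ((L v)⁻¹ x))⁻¹ := by
  rw [leftAction, toGroup.of, leftActionOf_apply]

theorem leftAction_mul_apply (h : IsSquareFreeSolution r)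
    (hL : ∀ x y : X, L (of x) y = (r (x, y)).1) (u v w : StructureGroup r) :
    leftAction h hL (u * v) w = leftAction h hL u (leftAction h hL v w) := by
  rw [map_mul, Equiv.Perm.mul_apply]

theorem leftAction_apply_one (h : IsSquareFreeSolution r)
    (hL : ∀ x y : X, L (of x) y = (r (x, y)).1) (u : StructureGroup r) :
    leftAction h hL u 1 = 1 :=
  generated_by _ ((MulAction.stabilizer _ (1 : StructureGroup r)).comap (leftAction h hL))
    (fun x => by simp [leftAction_of_apply]) u

theorem leftAction_apply_of (h : IsSquareFreeSolution r)
    (hL : ∀ x y : X, L (of x) y = (r (x, y)).1) (u : StructureGroup r) (y : X) :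
    leftAction h hL u (of y) = of (L u y) := by
  induction u using presentedGroup_induction generalizing y with
  | one => simp
  | gen x =>
    rw [leftAction_of_apply, of_mul_of_eq h hL, mul_inv_cancel_right]
  | mul g g' hg hg' => rw [leftAction_mul_apply, hg', hg, map_mul, Equiv.Perm.mul_apply]
  | inv g hg =>
    apply (leftAction h hL g).injective
    simp [hg]

theorem leftAction_apply_mul (h : IsSquareFreeSolution r)
    (hL : ∀ x y : X, L (of x) y = (r (x, y)).1) (u v w : StructureGroup r) :
    leftAction h hL u (v * w) =
      leftAction h hL u v * leftAction h hL ((leftAction h hL u v)⁻¹ * u * v) w := by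
  induction u using presentedGroup_induction generalizing v w with
  | one => simp
  | gen x =>
    have hx : (leftAction h hL (of x) v)⁻¹ * of x * v = of ((L v)⁻¹ x) := by
      rw [leftAction_of_apply]; group
    rw [hx, leftAction_of_apply, leftAction_of_apply, leftAction_of_apply, map_mul, mul_inv_rev,
      Equiv.Perm.mul_apply]
    group
  | mul g g' hg hg' =>
    rw [leftAction_mul_apply h hL g g' (v * w), hg', hg, ← leftAction_mul_apply h hL _ _ w,
      ← leftAction_mul_apply h hL g g' v]
    congr 3
    group
  | inv g hg =>
    apply (leftAction h hL g).injective
    simp [hg]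

theorem leftAction_apply_of_mem_ker (h : IsSquareFreeSolution r)
    (hL : ∀ x y : X, L (of x) y = (r (x, y)).1) {u : StructureGroup r} (hu : u ∈ L.ker)
    (v : StructureGroup r) : leftAction h hL u v = v := by
  induction v using presentedGroup_induction generalizing u with
  | one => exact leftAction_apply_one h hL u
  | gen y => rw [leftAction_apply_of, MonoidHom.mem_ker.1 hu, Equiv.Perm.one_apply]
  | mul v w hv hw =>
    rw [leftAction_apply_mul, hv hu, hw (L.normal_ker.conj_mem' u hu v)]
  | inv v hv =>
    have hcocycle := leftAction_apply_mul h hL (v * u * v⁻¹) v v⁻¹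
    rwa [mul_inv_cancel, leftAction_apply_one, hv (L.normal_ker.conj_mem u hu v),
      show v⁻¹ * (v * u * v⁻¹) * v = u by group, eq_comm, mul_eq_one_iff_eq_inv'] at hcocycle

theorem leftAction_apply_eq_conj_of_mem_ker (h : IsSquareFreeSolution r)
    (hL : ∀ x y : X, L (of x) y = (r (x, y)).1) (a : StructureGroup r) {u : StructureGroup r}
    (hu : u ∈ L.ker) : leftAction h hL a u = a * u * a⁻¹ := by
  induction a using presentedGroup_induction generalizing u with
  | one => simp
  | gen x => rw [leftAction_of_apply, MonoidHom.mem_ker.1 hu, inv_one, Equiv.Perm.one_apply]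
  | mul a b ha hb =>
    rw [leftAction_mul_apply, hb hu, ha (L.normal_ker.conj_mem u hu b)]
    group
  | inv a ha =>
    apply (leftAction h hL a).injective
    rw [inv_inv, ha (L.normal_ker.conj_mem' u hu a), ← leftAction_mul_apply, mul_inv_cancel,
      map_one, Equiv.Perm.one_apply]
    group

end

/-- the kernel of the canonical map `L : G(X,r) → Sym(X)` is abelian
(it is automatically normal, being a kernel). -/
theorem stmt4 {X : Type*} (r : X × X → X × X) (h : IsSquareFreeSolution r)
    (L : PresentedGroup (structRels r) →* Equiv.Perm X)
    (hL : ∀ x y : X, L (PresentedGroup.of x) y = (r (x, y)).1) :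
    ∀ u v : PresentedGroup (structRels r), u ∈ L.ker → v ∈ L.ker → u * v = v * u := by
  intro u v hu hv
  have hconj : v * u * v⁻¹ = u := by
    rw [← leftAction_apply_eq_conj_of_mem_ker h hL v hu, leftAction_apply_of_mem_ker h hL hv]
  calc u * v = v * u * v⁻¹ * v := by rw [hconj]
    _ = v * u := inv_mul_cancel_right (v * u) v

end YBPaper
end

section
/- Let (X,r) be a square-free solution of arbitrary cardinality. Then mpl(X,r) ≤ m if and only if for all x, y₁, …, y_m ∈ X the identity (⋯((y_m ▷ y_{m-1}) ▷ y_{m-2}) ▷ ⋯ ▷ y₁) ▷ x = (⋯(y_{m-1} ▷ y_{m-2}) ▷ ⋯ ▷ y₁) ▷ x holds, where a ▷ b denotes the left action ᵃb = L_a(b). -/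
/-!
Unwinding `relk`, the `(k+1)`-st retract identifies `x` and `y` iff they give the same value
when put on top of any tower of height `k + 1`; this rests on the identity
`tw (s ++ [z, x]) = tw (s ++ [x ▷ z])`, which collapses the top two floors of a tower.
Square-freeness gives `x ▷ x = x`, so doubling the top floor of a tower does not change it:
comparing a tower with the one whose top floor is replaced by an arbitrary element is then the
same as comparing it with the tower without its top floor.
-/
namespace YBPaper

variable {X : Type*}

/-- The tower of actions: `tw l [y₁, …, y_m] x = ((⋯(y_m ▷ y_{m-1}) ▷ ⋯ ▷ y₁) ▷ x`. -/
def tw (l : X → X → X) : List X → X → X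
  | [], x => x
  | y :: ys, x => l (tw l ys y) x

section Tower

variable (l : X → X → X)

theorem tw_append_pair (s : List X) (z x w : X) :
    tw l (s ++ [z, x]) w = tw l (s ++ [l x z]) w := by
  induction s generalizing w with
  | nil => rfl
  | cons c s ih => simp only [List.cons_append, tw, ih]

theorem relk_succ_iff (k : ℕ) (x y : X) :
    relk l (k + 1) x y ↔
      ∀ s : List X, s.length = k → ∀ w, tw l (s ++ [x]) w = tw l (s ++ [y]) w := by
  induction k generalizing x y with
  | zero => simp [relk, tw]
  | succ k ih =>
    refine (forall_congr' fun z => ih (l x z) (l y z)).trans ⟨?_, ?_⟩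
    · intro H s hs w
      obtain ⟨s, z, rfl⟩ := (List.eq_nil_or_concat' s).resolve_left (by rintro rfl; simp at hs)
      simpa [tw_append_pair] using H z s (by simpa using hs) w
    · intro H z s hs w
      simpa [tw_append_pair] using H (s ++ [z]) (by simp [hs]) w

variable {l}

-- `(w :: s).getLast _` is the top element of the tower `tw l s w`, or `w` itself if `s = []`.
theorem tw_append_getLast_of_idem (hl : ∀ x, l x x = x) (s : List X) (w : X) :
    tw l (s ++ [(w :: s).getLast (List.cons_ne_nil w s)]) w = tw l s w := by
  rcases List.eq_nil_or_concat' s with rfl | ⟨s', b, rfl⟩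
  · simp [tw, hl]
  · simp [tw_append_pair, hl]

theorem mplLe_succ_iff_of_idem (hl : ∀ x, l x x = x) (k : ℕ) :
    mplLe l (k + 1) ↔
      ∀ L : List X, L.length = k + 1 → ∀ w, tw l L w = tw l L.dropLast w := by
  simp only [mplLe, relk_succ_iff]
  constructor
  · intro H L hL w
    obtain ⟨s, a, rfl⟩ := (List.eq_nil_or_concat' L).resolve_left (by rintro rfl; simp at hL)
    simp only [List.length_append, List.length_singleton, Nat.add_right_cancel_iff] at hL
    rw [List.dropLast_concat, H a _ s hL w, tw_append_getLast_of_idem hl]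
  · intro H x y s hs w
    have hx := H (s ++ [x]) (by simp [hs]) w
    have hy := H (s ++ [y]) (by simp [hs]) w
    rw [List.dropLast_concat] at hx hy
    rw [hx, hy]

end Tower

theorem IsSquareFreeSolution.lact_self {r : X × X → X × X} (h : IsSquareFreeSolution r) (x : X) :
    lact r x x = x := by
  simp [lact, h.sqfree x]

/-- `mpl(X,r) ≤ m` iff every tower of `m` actions on `x` equals the tower
obtained by deleting the top (leftmost) element `y_m`. -/
theorem stmt5 {X : Type*} (r : X × X → X × X) (h : IsSquareFreeSolution r)
    (m : ℕ) (hm : 1 ≤ m) :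
    mplLe (lact r) m ↔
      ∀ l : List X, l.length = m → ∀ x : X,
        tw (lact r) l x = tw (lact r) l.dropLast x := by
  obtain ⟨k, rfl⟩ : ∃ k, m = k + 1 := ⟨m - 1, by omega⟩
  exact mplLe_succ_iff_of_idem h.lact_self k

end YBPaper
end

section
/- Let (X,r) be a square-free solution of arbitrary cardinality whose permutation group G(X,r) is abelian. Then for every x ∈ X, the restriction of L_x to the G(X,r)-orbit of x is the identity; i.e. each orbit, with the restricted solution, is a trivial solution. -/
namespace YBPaper

variable {X : Type*}

theorem _root_.Equiv.Perm.apply_eq_self_of_mem_orbit {α : Type*} {H : Subgroup (Equiv.Perm α)}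
    {σ : Equiv.Perm α} (hσ : ∀ τ ∈ H, Commute σ τ) {x y : α} (hx : σ x = x)
    (hy : y ∈ MulAction.orbit H x) : σ y = y := by
  obtain ⟨τ, rfl⟩ := hy
  calc σ ((τ : Equiv.Perm α) x) = (τ : Equiv.Perm α) (σ x) :=
        congrArg (· x) (hσ τ τ.2).eq
    _ = (τ : Equiv.Perm α) x := by rw [hx]

namespace IsSquareFreeSolution

variable {r : X × X → X × X}

noncomputable def lactPerm (h : IsSquareFreeSolution r) (x : X) : Equiv.Perm X :=
  Equiv.ofBijective _ (h.nondegL x)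

theorem lactPerm_mem_Gcal (h : IsSquareFreeSolution r) (x : X) : h.lactPerm x ∈ Gcal r :=
  Subgroup.subset_closure ⟨x, fun _ => rfl⟩

theorem lact_self_s7 (h : IsSquareFreeSolution r) (x : X) : lact r x x = x := by
  simp only [lact, h.sqfree x]

end IsSquareFreeSolution

/-- if `𝒢(X,r)` is abelian then every `L_x` restricts to the identity
on the `𝒢(X,r)`-orbit of `x`, i.e. every orbit is a trivial solution. -/
theorem stmt7 {X : Type*} (r : X × X → X × X) (h : IsSquareFreeSolution r)
    (hab : ∀ σ ∈ Gcal r, ∀ τ ∈ Gcal r, σ * τ = τ * σ) :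
    ∀ x : X, ∀ ξ ∈ MulAction.orbit (↥(Gcal r)) x, lact r x ξ = ξ := by
  intro x ξ hξ
  have hcomm : ∀ τ ∈ Gcal r, Commute (h.lactPerm x) τ :=
    fun τ hτ => hab _ (h.lactPerm_mem_Gcal x) τ hτ
  exact Equiv.Perm.apply_eq_self_of_mem_orbit hcomm (h.lact_self_s7 x) hξ

end YBPaper
end

section
/- Let A be a nonzero free abelian group of finite rank and H a nontrivial finite group acting faithfully on A by automorphisms. Let [H,A] be the subgroup of A generated by all elements ʰa − a for a ∈ A, h ∈ H. Then [H,A] ≠ 0, [H,A] is an H-submodule of A, and H acts faithfully on [H,A]. -/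
/-!
An element `h` of finite order `n` that fixes `d = h • a - a` moves `a` along the line
`a, a + d, a + 2 • d, …`, so `a = h ^ n • a = a + n • d`; in a torsion-free group this forces
`d = 0`. Hence an `h` acting trivially on `[H,A]` acts trivially on `A`.
-/

namespace YBPaper

section SMulCommutator

variable {H A : Type*} [Group H] [AddCommGroup A] [DistribMulAction H A]

variable (H A) in
/-- The subgroup `[H,A]` of `A`. -/
def smulCommutator : AddSubgroup A :=
  AddSubgroup.closure {x : A | ∃ (h : H) (a : A), x = h • a - a}

theorem smul_sub_self_mem_smulCommutator (h : H) (a : A) : h • a - a ∈ smulCommutator H A :=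
  AddSubgroup.subset_closure ⟨h, a, rfl⟩

theorem smul_mem_smulCommutator (h : H) {x : A} (hx : x ∈ smulCommutator H A) :
    h • x ∈ smulCommutator H A := by
  suffices smulCommutator H A ≤ (smulCommutator H A).comap (DistribSMul.toAddMonoidHom A h) from
    this hx
  refine (AddSubgroup.closure_le _).mpr ?_
  rintro _ ⟨g, a, rfl⟩
  have hsplit : h • (g • a - a) = ((h * g) • a - a) - (h • a - a) := by
    rw [smul_sub, mul_smul]
    abel
  change h • (g • a - a) ∈ smulCommutator H A
  rw [hsplit]
  exact sub_mem (smul_sub_self_mem_smulCommutator _ _) (smul_sub_self_mem_smulCommutator _ _)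

theorem smulCommutator_ne_bot [Nontrivial H] [FaithfulSMul H A] : smulCommutator H A ≠ ⊥ := by
  obtain ⟨h, hh⟩ := exists_ne (1 : H)
  obtain ⟨a, ha⟩ : ∃ a : A, h • a ≠ a := by
    by_contra! hfix
    exact hh (eq_of_smul_eq_smul fun a : A => by rw [hfix a, one_smul])
  intro hbot
  have hmem := smul_sub_self_mem_smulCommutator h a
  rw [hbot, AddSubgroup.mem_bot, sub_eq_zero] at hmem
  exact ha hmem

end SMulCommutator

theorem pow_smul_eq_add_nsmul_of_smul_sub_self_fixed {M A : Type*} [Monoid M] [AddCommGroup A]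
    [DistribMulAction M A] {h : M} {a : A} (hfix : h • (h • a - a) = h • a - a) (n : ℕ) :
    h ^ n • a = a + n • (h • a - a) := by
  induction n with
  | zero => simp
  | succ n ih =>
    rw [pow_succ', mul_smul, ih, smul_add, smul_comm, hfix, succ_nsmul]
    abel

theorem smul_eq_self_of_smul_sub_self_fixed {M A : Type*} [Monoid M] [AddCommGroup A]
    [IsAddTorsionFree A] [DistribMulAction M A] {h : M} (hh : IsOfFinOrder h) {a : A}
    (hfix : h • (h • a - a) = h • a - a) : h • a = a := by
  have hpow := pow_smul_eq_add_nsmul_of_smul_sub_self_fixed hfix (orderOf h)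
  rw [pow_orderOf_eq_one, one_smul, left_eq_add, nsmul_eq_zero_iff] at hpow
  rcases hpow with hd | hn
  · exact sub_eq_zero.mp hd
  · exact absurd hn (orderOf_pos_iff.mpr hh).ne'

theorem eq_one_of_forall_mem_smulCommutator_smul_eq {H A : Type*} [Group H] [Finite H]
    [AddCommGroup A] [IsAddTorsionFree A] [DistribMulAction H A] [FaithfulSMul H A] {h : H}
    (hfix : ∀ x ∈ smulCommutator H A, h • x = x) : h = 1 :=
  eq_of_smul_eq_smul fun a : A => by
    rw [one_smul]
    exact smul_eq_self_of_smul_sub_self_fixed (isOfFinOrder_of_finite h)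
      (hfix _ (smul_sub_self_mem_smulCommutator h a))

theorem stmt12_general {A H : Type*} [AddCommGroup A] [Module.Free ℤ A]
    [Group H] [Finite H] [Nontrivial H]
    [DistribMulAction H A] [FaithfulSMul H A] :
    AddSubgroup.closure {x : A | ∃ (h : H) (a : A), x = h • a - a} ≠ ⊥ ∧
    (∀ (h : H), ∀ x ∈ AddSubgroup.closure {x : A | ∃ (h : H) (a : A), x = h • a - a},
        h • x ∈ AddSubgroup.closure {x : A | ∃ (h : H) (a : A), x = h • a - a}) ∧
    (∀ h : H,
      (∀ x ∈ AddSubgroup.closure {x : A | ∃ (h : H) (a : A), x = h • a - a}, h • x = x) →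
      h = 1) := by
  have : IsAddTorsionFree A := .of_isTorsionFree ℤ A
  exact ⟨smulCommutator_ne_bot, fun h _ ↦ smul_mem_smulCommutator h,
    fun _ ↦ eq_one_of_forall_mem_smulCommutator_smul_eq⟩

/-- if a nontrivial finite group `H` acts faithfully on a nonzero free
abelian group `A` of finite rank, then `[H,A] = ⟨ʰa - a⟩` is nonzero, is an
`H`-submodule, and `H` acts faithfully on it. -/
theorem stmt12 {A H : Type*} [AddCommGroup A] [Module.Free ℤ A] [Module.Finite ℤ A]
    [Nontrivial A] [Group H] [Finite H] [Nontrivial H]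
    [DistribMulAction H A] [FaithfulSMul H A] :
    AddSubgroup.closure {x : A | ∃ (h : H) (a : A), x = h • a - a} ≠ ⊥ ∧
    (∀ (h : H), ∀ x ∈ AddSubgroup.closure {x : A | ∃ (h : H) (a : A), x = h • a - a},
        h • x ∈ AddSubgroup.closure {x : A | ∃ (h : H) (a : A), x = h • a - a}) ∧
    (∀ h : H,
      (∀ x ∈ AddSubgroup.closure {x : A | ∃ (h : H) (a : A), x = h • a - a}, h • x = x) →
      h = 1) :=
  stmt12_general

end YBPaper
end

section
/- Let R be a finite ring with 1, A a finite faithful R-module, and ω a unit of R generating a commutative subring with 1. For a ∈ A define L_a : A → A by L_a(x) = ωx + (1−ω)a, and r(a,b) = (L_a(b), L_b⁻¹(a)). Then the following are equivalent: (a) (A,r) is a non-degenerate involutive square-free solution of the YBE; (b) the maps L_a, a ∈ A, pairwise commute; (c) (1−ω)² = 0. Moreover, in this case and when ω ≠ 1, the solution has multipermutation level 2. -/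
namespace YBPaper

variable {X : Type*}

/-- The affine map `L_a(x) = ωx + (1-ω)a`. -/
def affL {R A : Type*} [Ring R] [AddCommGroup A] [Module R A] (ω : Rˣ) (a x : A) : A :=
  (ω : R) • x + (1 - (ω : R)) • a

/-- The quadratic map `r(a,b) = (L_a(b), L_b⁻¹(a))` built from the affine maps. -/
def affR {R A : Type*} [Ring R] [AddCommGroup A] [Module R A] (ω : Rˣ) :
    A × A → A × A :=
  fun p => (affL ω p.1 p.2, affL ω⁻¹ p.2 p.1)

/-!
With `t = 1 - ω`, one has `L_a(L_b x) - L_b(L_a x) = t² (a - b)` and the first component of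
`r(r(a, b))` is `a + t² (a - b)`, so both commutativity and involutivity force `t² • A = 0`,
i.e. `t² = 0` by faithfulness. Conversely, if `t² = 0` then `L_a x = x + t(a - x)` and
`L_a⁻¹ x = x - t(a - x)`, so `r(a, b) = (b + t(a - b), a + t(a - b))`; every composite of such
maps is a permutation of the arguments plus `t` times a linear form in them, and the
Yang–Baxter equation reduces to a linear identity. Moreover `L_{L_a b} = L_b`, giving level
`≤ 2`, while `L_a(0) = t a ≠ 0 = L_0(0)` for some `a` when `t ≠ 0`.
-/

section Affine

variable {R A : Type*} [Ring R] [AddCommGroup A] [Module R A]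

theorem eq_zero_of_forall_smul_eq_zero [FaithfulSMul R A] {s : R} (hs : ∀ a : A, s • a = 0) :
    s = 0 :=
  FaithfulSMul.eq_of_smul_eq_smul fun a : A => by rw [hs, zero_smul]

variable (ω : Rˣ)

theorem affL_inv_affL (a x : A) : affL ω⁻¹ a (affL ω a x) = x := by
  simp only [affL, smul_add, smul_smul]
  match_scalars <;> simp [mul_sub]

theorem affL_affL_inv (a x : A) : affL ω a (affL ω⁻¹ a x) = x := by
  simpa using affL_inv_affL ω⁻¹ a x

theorem bijective_affL (a : A) : Function.Bijective (affL ω a) :=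
  Function.bijective_iff_has_inverse.mpr
    ⟨affL ω⁻¹ a, affL_inv_affL ω a, affL_affL_inv ω a⟩

theorem affL_zero_right (a : A) : affL ω a 0 = (1 - (ω : R)) • a := by
  simp [affL]

theorem affL_affL_sub_affL_affL (a b x : A) :
    affL ω a (affL ω b x) - affL ω b (affL ω a x) = (1 - (ω : R)) ^ 2 • (a - b) := by
  simp only [affL, smul_add, smul_smul]
  match_scalars <;> noncomm_ring

theorem affL_eq_add_smul_sub (a x : A) : affL ω a x = x + (1 - (ω : R)) • (a - x) := by
  simp only [affL, smul_sub, sub_smul, one_smul]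
  abel

theorem affR_affR_fst (a b : A) :
    (affR ω (affR ω (a, b))).1 = a + (1 - (ω : R)) ^ 2 • (a - b) := by
  simp only [affR, affL, smul_add, smul_smul]
  match_scalars <;> simp only [mul_sub, mul_one, Units.mul_inv] <;> noncomm_ring

variable {ω}

theorem one_sub_smul_one_sub_smul (hω : (1 - (ω : R)) ^ 2 = 0) (x : A) :
    (1 - (ω : R)) • (1 - (ω : R)) • x = 0 := by
  rw [smul_smul, ← pow_two, hω, zero_smul]

theorem affL_inv_eq_sub_smul_sub (hω : (1 - (ω : R)) ^ 2 = 0) (a x : A) :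
    affL ω⁻¹ a x = x - (1 - (ω : R)) • (a - x) := by
  apply (bijective_affL ω a).injective
  rw [affL_affL_inv, affL_eq_add_smul_sub ω]
  simp only [smul_sub, one_sub_smul_one_sub_smul hω]
  abel

theorem affR_eq_swap_add (hω : (1 - (ω : R)) ^ 2 = 0) (a b : A) :
    affR ω (a, b) = (b + (1 - (ω : R)) • (a - b), a + (1 - (ω : R)) • (a - b)) := by
  simp only [affR, affL_eq_add_smul_sub ω, affL_inv_eq_sub_smul_sub hω, smul_sub,
    Prod.mk.injEq, true_and]
  abel

theorem affL_affL_left (hω : (1 - (ω : R)) ^ 2 = 0) (a b x : A) :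
    affL ω (affL ω a b) x = affL ω b x := by
  simp only [affL_eq_add_smul_sub, smul_add, smul_sub, one_sub_smul_one_sub_smul hω]
  abel

theorem isSquareFreeSolution_affR (hω : (1 - (ω : R)) ^ 2 = 0) :
    IsSquareFreeSolution (affR (A := A) ω) where
  nondegL := bijective_affL ω
  nondegR := bijective_affL ω⁻¹
  invol := by
    rintro ⟨a, b⟩
    simp only [affR_eq_swap_add hω, smul_add, smul_sub, one_sub_smul_one_sub_smul hω,
      Prod.mk.injEq]
    constructor <;> abel
  sqfree := by simp [affR_eq_swap_add hω]
  braided := by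
    rintro ⟨x, y, z⟩
    simp only [r12, r23, affR_eq_swap_add hω, smul_add, smul_sub, one_sub_smul_one_sub_smul hω,
      Prod.mk.injEq]
    refine ⟨?_, ?_, ?_⟩ <;> abel

variable [FaithfulSMul R A]

theorem sq_eq_zero_of_isSquareFreeSolution (hr : IsSquareFreeSolution (affR (A := A) ω)) :
    (1 - (ω : R)) ^ 2 = 0 :=
  eq_zero_of_forall_smul_eq_zero fun a : A => by
    simpa [affR_affR_fst] using congrArg Prod.fst (hr.invol (a, 0))

theorem affL_commute_iff :
    (∀ a b x : A, affL ω a (affL ω b x) = affL ω b (affL ω a x)) ↔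
      (1 - (ω : R)) ^ 2 = 0 := by
  simp_rw [← sub_eq_zero (a := affL ω _ _), affL_affL_sub_affL_affL]
  refine ⟨fun h => eq_zero_of_forall_smul_eq_zero fun a => by simpa using h a 0 0,
    fun h a b x => by rw [h, zero_smul]⟩

theorem mplEq_two_lact_affR (hω : (1 - (ω : R)) ^ 2 = 0) (hω1 : (ω : R) ≠ 1) :
    mplEq (lact (affR (A := A) ω)) 2 := by
  obtain ⟨a, ha⟩ : ∃ a : A, (1 - (ω : R)) • a ≠ 0 := by
    by_contra! h
    exact sub_ne_zero.mpr hω1.symm (eq_zero_of_forall_smul_eq_zero h)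
  refine ⟨fun x y z z' => ?_, fun k hk hle => ?_⟩
  · show affL ω (affL ω x z) z' = affL ω (affL ω y z) z'
    rw [affL_affL_left hω, affL_affL_left hω]
  · interval_cases k
    · exact ha (hle ((1 - (ω : R)) • a) 0)
    · exact ha (by simpa [relk, lact, affR, affL_zero_right] using hle a 0 0)

end Affine

theorem stmt16_general {R A : Type*} [Ring R] [AddCommGroup A] [Module R A]
    [FaithfulSMul R A] (ω : Rˣ) :
    (IsSquareFreeSolution (affR (A := A) ω) ↔ (1 - (ω : R)) ^ 2 = 0) ∧
    ((∀ a b x : A, affL ω a (affL ω b x) = affL ω b (affL ω a x)) ↔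
        (1 - (ω : R)) ^ 2 = 0) ∧
    ((1 - (ω : R)) ^ 2 = 0 → (ω : R) ≠ 1 → mplEq (lact (affR (A := A) ω)) 2) :=
  ⟨⟨sq_eq_zero_of_isSquareFreeSolution, isSquareFreeSolution_affR⟩, affL_commute_iff,
    mplEq_two_lact_affR⟩

/-- `(A, r)` is a square-free solution iff the `L_a` pairwise commute
iff `(1-ω)² = 0`; and in that case, when `ω ≠ 1`, the solution has `mpl = 2`. -/
theorem stmt16 {R A : Type*} [Ring R] [Finite R] [AddCommGroup A] [Module R A]
    [Finite A] [FaithfulSMul R A] (ω : Rˣ) :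
    (IsSquareFreeSolution (affR (A := A) ω) ↔ (1 - (ω : R)) ^ 2 = 0) ∧
    ((∀ a b x : A, affL ω a (affL ω b x) = affL ω b (affL ω a x)) ↔
        (1 - (ω : R)) ^ 2 = 0) ∧
    ((1 - (ω : R)) ^ 2 = 0 → (ω : R) ≠ 1 → mplEq (lact (affR (A := A) ω)) 2) :=
  stmt16_general ω

end YBPaper
end

section
/- Let (X₀, r₀) and (Y, r_Y) be disjoint square-free solutions of the YBE. Form the wreath product solution (Z, r) = (X₀, r₀) ≀ (Y, r_Y): Z is the disjoint union of copies X_α of X₀ indexed by α ∈ Y together with Y; r restricts to the copy of r₀ on each X_α and to r_Y on Y; distinct copies X_α, X_β act trivially on each other; and for β ∈ Y, L_β maps X_α to X_{ᵝα} by the identity on lettered indices: L_β(t_{α,x}) = t_{ᵝα, x}. Then (Z,r) is a square-free solution of the YBE. -/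
namespace YBPaper

variable {X : Type*}

/-- The wreath product map on `Z = (Y × X₀) ⊕ Y`, where `(α, x)` represents the copy
`t_{α,x}` of `x ∈ X₀` indexed by `α ∈ Y`:
* within one copy it is the copy of `r₀`; distinct copies act trivially on each other;
* `β ∈ Y` maps `t_{α,x}` to `t_{ᵝα,x}` and is unchanged; elements of copies act
  trivially on `Y` (with the inverse permutation appearing on the right output);
* on `Y` it is `r_Y`. -/
noncomputable def wreathR {X0 Y : Type*} [Nonempty Y] [DecidableEq Y]
    (r0 : X0 × X0 → X0 × X0) (rY : Y × Y → Y × Y) :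
    ((Y × X0) ⊕ Y) × ((Y × X0) ⊕ Y) → ((Y × X0) ⊕ Y) × ((Y × X0) ⊕ Y) :=
  fun p =>
    match p with
    | (Sum.inl (α, x), Sum.inl (α', x')) =>
        if α = α' then
          (Sum.inl (α, (r0 (x, x')).1), Sum.inl (α, (r0 (x, x')).2))
        else (Sum.inl (α', x'), Sum.inl (α, x))
    | (Sum.inr β, Sum.inl (α, x)) => (Sum.inl ((rY (β, α)).1, x), Sum.inr β)
    | (Sum.inl (α, x), Sum.inr β) =>
        (Sum.inr β, Sum.inl (Function.invFun (fun a => (rY (β, a)).1) α, x))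
    | (Sum.inr β, Sum.inr γ) => (Sum.inr (rY (β, γ)).1, Sum.inr (rY (β, γ)).2)

/-! Inside a copy `X_α` the map is a copy of `r₀`, on `Y` it is `r_Y`, and distinct copies
swap trivially, so most of every axiom is inherited. Every left or right translation of `Z`
moves the copies by a permutation of `Y`, acts inside them fibrewise and permutes `Y`, hence
is bijective. On the mixed triples the braid relation reduces to the cycle condition
`L_β L_γ = L_{ᵝγ} L_{β^γ}` of `r_Y` (the first component of its braid relation), which says
that `β ↦ L_β` acts on the set of copies compatibly with `r_Y`. -/

open Equiv Function Sum

section Braid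

variable {Z : Type*}

theorem r12_prodMap {r : X × X → X × X} {s : Z × Z → Z × Z} {f : X → Z}
    (hf : ∀ a b, s (f a, f b) = Prod.map f f (r (a, b))) (p : X × X × X) :
    r12 s (Prod.map f (Prod.map f f) p) = Prod.map f (Prod.map f f) (r12 r p) := by
  simp [r12, hf]

theorem r23_prodMap {r : X × X → X × X} {s : Z × Z → Z × Z} {f : X → Z}
    (hf : ∀ a b, s (f a, f b) = Prod.map f f (r (a, b))) (p : X × X × X) :
    r23 s (Prod.map f (Prod.map f f) p) = Prod.map f (Prod.map f f) (r23 r p) := by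
  simp [r23, hf]

theorem braid_prodMap {r : X × X → X × X} {s : Z × Z → Z × Z} {f : X → Z}
    (hf : ∀ a b, s (f a, f b) = Prod.map f f (r (a, b))) {p : X × X × X}
    (hp : r12 r (r23 r (r12 r p)) = r23 r (r12 r (r23 r p))) :
    r12 s (r23 s (r12 s (Prod.map f (Prod.map f f) p)))
      = r23 s (r12 s (r23 s (Prod.map f (Prod.map f f) p))) := by
  simp only [r12_prodMap hf, r23_prodMap hf, hp]

end Braid

namespace IsSquareFreeSolution

variable {r : X × X → X × X} (h : IsSquareFreeSolution r)
include h

noncomputable def lperm (x : X) : Perm X := Equiv.ofBijective _ (h.nondegL x)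

noncomputable def rperm (y : X) : Perm X := Equiv.ofBijective _ (h.nondegR y)

theorem lperm_apply (x y : X) : h.lperm x y = (r (x, y)).1 := rfl

theorem rperm_apply (x y : X) : h.rperm y x = (r (x, y)).2 := rfl

theorem invFun_eq_lperm_symm [Nonempty X] (x : X) :
    invFun (fun y => (r (x, y)).1) = (h.lperm x).symm :=
  funext fun y => (h.lperm x).injective <| by
    rw [apply_symm_apply]
    exact rightInverse_invFun (h.nondegL x).2 y

theorem lperm_mul_lperm (x y : X) :
    h.lperm x * h.lperm y = h.lperm (r (x, y)).1 * h.lperm (r (x, y)).2 := by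
  ext z
  simpa [r12, r23, lperm_apply] using (congrArg Prod.fst (h.braided (x, y, z))).symm

theorem lperm_lperm (x y z : X) :
    h.lperm (r (x, y)).1 (h.lperm (r (x, y)).2 z) = h.lperm x (h.lperm y z) :=
  (DFunLike.congr_fun (h.lperm_mul_lperm x y) z).symm

theorem lperm_symm_lperm (x y z : X) :
    (h.lperm (r (x, y)).1).symm (h.lperm x z) = h.lperm (r (x, y)).2 ((h.lperm y).symm z) := by
  rw [symm_apply_eq, lperm_lperm, apply_symm_apply]

theorem lperm_symm_lperm_symm (x y z : X) :
    (h.lperm y).symm ((h.lperm x).symm z)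
      = (h.lperm (r (x, y)).2).symm ((h.lperm (r (x, y)).1).symm z) := by
  rw [eq_symm_apply, eq_symm_apply, lperm_lperm, apply_symm_apply, apply_symm_apply]

end IsSquareFreeSolution

def copyPerm {X0 Y : Type*} (σ : Perm Y) (τ : Y → Perm X0) (ρ : Perm Y) :
    Perm ((Y × X0) ⊕ Y) :=
  sumCongr (prodShear σ τ) ρ

section Wreath

variable {X0 Y : Type*} [Nonempty Y] [DecidableEq Y]
  (r0 : X0 × X0 → X0 × X0) (rY : Y × Y → Y × Y)

theorem wreathR_inl_inl (α α' : Y) (x x' : X0) :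
    wreathR r0 rY (inl (α, x), inl (α', x')) =
      if α = α' then (inl (α, (r0 (x, x')).1), inl (α, (r0 (x, x')).2))
      else (inl (α', x'), inl (α, x)) := rfl

theorem wreathR_inl_inl_self (α : Y) (x x' : X0) :
    wreathR r0 rY (inl (α, x), inl (α, x')) =
      Prod.map (fun y => inl (α, y)) (fun y => inl (α, y)) (r0 (x, x')) := by
  simp only [wreathR_inl_inl]
  rfl

theorem wreathR_inr_inr (β γ : Y) :
    wreathR r0 rY (inr β, inr γ) = (inr (rY (β, γ)).1, inr (rY (β, γ)).2) := rfl

variable {r0 rY} (h0 : IsSquareFreeSolution r0) (hY : IsSquareFreeSolution rY)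

theorem wreathR_inr_inl (β α : Y) (x : X0) :
    wreathR r0 rY (inr β, inl (α, x)) = (inl (hY.lperm β α, x), inr β) := rfl

theorem wreathR_inl_inr (α β : Y) (x : X0) :
    wreathR r0 rY (inl (α, x), inr β) = (inr β, inl ((hY.lperm β).symm α, x)) := by
  simp [wreathR, hY.invFun_eq_lperm_symm]

theorem lact_wreathR_inl (α : Y) (x : X0) :
    lact (wreathR r0 rY) (inl (α, x)) = copyPerm 1 (Pi.mulSingle α (h0.lperm x)) 1 := by
  funext z
  rcases z with ⟨a, y⟩ | b
  · by_cases ha : α = a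
    · subst ha
      simp [lact, wreathR_inl_inl, copyPerm, prodShear, h0.lperm_apply]
    · simp [lact, wreathR_inl_inl, copyPerm, prodShear, ha, Pi.mulSingle_apply, Ne.symm ha]
  · rfl

theorem lact_wreathR_inr (β : Y) :
    lact (wreathR r0 rY) (inr β) = copyPerm (hY.lperm β) 1 (hY.lperm β) := by
  funext z
  rcases z with ⟨a, y⟩ | b <;> rfl

theorem ract_wreathR_inl (α : Y) (x : X0) :
    (ract (wreathR r0 rY) · (inl (α, x))) = copyPerm 1 (Pi.mulSingle α (h0.rperm x)) 1 := by
  funext z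
  rcases z with ⟨a, y⟩ | b
  · by_cases ha : a = α
    · subst ha
      simp [ract, wreathR_inl_inl, copyPerm, prodShear, h0.rperm_apply]
    · simp [ract, wreathR_inl_inl, copyPerm, prodShear, ha, Pi.mulSingle_apply]
  · rfl

theorem ract_wreathR_inr (β : Y) :
    (ract (wreathR r0 rY) · (inr β)) = copyPerm (hY.lperm β).symm 1 (hY.rperm β) := by
  funext z
  rcases z with ⟨a, y⟩ | b
  · simp [ract, wreathR_inl_inr hY, copyPerm, prodShear]
  · rfl

include h0 hY

theorem bijective_lact_wreathR (z : (Y × X0) ⊕ Y) : Bijective (lact (wreathR r0 rY) z) := by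
  rcases z with ⟨α, x⟩ | β
  · rw [lact_wreathR_inl h0]
    exact Equiv.bijective _
  · rw [lact_wreathR_inr hY]
    exact Equiv.bijective _

theorem bijective_ract_wreathR (z : (Y × X0) ⊕ Y) :
    Bijective (ract (wreathR r0 rY) · z) := by
  rcases z with ⟨α, x⟩ | β
  · rw [ract_wreathR_inl h0]
    exact Equiv.bijective _
  · rw [ract_wreathR_inr hY]
    exact Equiv.bijective _

theorem wreathR_involutive : Involutive (wreathR r0 rY) := by
  rintro ⟨⟨α, x⟩ | β, ⟨α', x'⟩ | γ⟩
  · by_cases hα : α = α'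
    · subst hα
      simp [wreathR_inl_inl, h0.invol]
    · simp [wreathR_inl_inl, hα, Ne.symm hα]
  · simp [wreathR_inl_inr hY, wreathR_inr_inl hY]
  · simp [wreathR_inl_inr hY, wreathR_inr_inl hY]
  · simp [wreathR_inr_inr, hY.invol]

theorem wreathR_self (z : (Y × X0) ⊕ Y) : wreathR r0 rY (z, z) = (z, z) := by
  rcases z with ⟨α, x⟩ | β
  · simp [wreathR_inl_inl, h0.sqfree]
  · simp [wreathR_inr_inr, hY.sqfree]

theorem wreathR_braided (p : ((Y × X0) ⊕ Y) × ((Y × X0) ⊕ Y) × ((Y × X0) ⊕ Y)) :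
    r12 (wreathR r0 rY) (r23 (wreathR r0 rY) (r12 (wreathR r0 rY) p))
      = r23 (wreathR r0 rY) (r12 (wreathR r0 rY) (r23 (wreathR r0 rY) p)) := by
  rcases p with ⟨⟨α, x⟩ | β, ⟨α', x'⟩ | γ, ⟨α'', x''⟩ | δ⟩
  · by_cases h1 : α = α' <;> by_cases h2 : α' = α'' <;> by_cases h3 : α = α''
    all_goals try subst h1 h2
    · exact braid_prodMap (wreathR_inl_inl_self r0 rY α) (h0.braided (x, x', x''))
    all_goals simp_all [r12, r23, wreathR_inl_inl, eq_comm]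
  · rcases eq_or_ne α α' with rfl | h1 <;>
      simp [r12, r23, wreathR_inl_inl, wreathR_inl_inr hY, *]
  · rcases eq_or_ne α (hY.lperm γ α'') with rfl | h1
    · simp [r12, r23, wreathR_inl_inl, wreathR_inl_inr hY, wreathR_inr_inl hY]
    · have : (hY.lperm γ).symm α ≠ α'' := by rwa [Ne, symm_apply_eq]
      simp [r12, r23, wreathR_inl_inl, wreathR_inl_inr hY, wreathR_inr_inl hY, *]
  · simp only [r12, r23, wreathR_inr_inr, wreathR_inl_inr hY, hY.lperm_symm_lperm_symm γ δ α]
  · rcases eq_or_ne α' α'' with rfl | h1 <;>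
      simp [r12, r23, wreathR_inl_inl, wreathR_inr_inl hY, *]
  · simp [r12, r23, wreathR_inr_inr, wreathR_inl_inr hY, wreathR_inr_inl hY, hY.lperm_symm_lperm]
  · simp [r12, r23, wreathR_inr_inr, wreathR_inr_inl hY, hY.lperm_lperm]
  · exact braid_prodMap (fun _ _ => rfl) (hY.braided (β, γ, δ))

end Wreath

/-- the wreath product of two square-free solutions is a square-free
solution. -/
theorem stmt18 {X0 Y : Type*} [Nonempty Y] [DecidableEq Y]
    (r0 : X0 × X0 → X0 × X0) (rY : Y × Y → Y × Y)
    (h0 : IsSquareFreeSolution r0) (hY : IsSquareFreeSolution rY) :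
    IsSquareFreeSolution (wreathR r0 rY) :=
  ⟨bijective_lact_wreathR h0 hY, bijective_ract_wreathR h0 hY, wreathR_involutive h0 hY,
    wreathR_self h0 hY, wreathR_braided h0 hY⟩

end YBPaper
end
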